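/- Characterization of the minimal safety vector: if R' ⊆ R is such that ml(Reach⁺_{R'})(r) ≤ cap for every r ∈ R', and n = ml(Reach⁺_{R'}), then for every state s with d = ⌈n⌉_{R'}^{cap}(s) ≤ cap there exists a strategy σ such that all σ-compatible runs from s loaded with d are safe; hence ml_S ≤ ⌈ml(Reach⁺_{R'})⌉_{R'}^{cap} where ⌈x⌉_{R'}^{cap}(s) is ∞ if x(s) > cap, 0 if x(s) ≤ cap and s ∈ R', and x(s) otherwise. -/

import Mathlib

open Classical

/-- A consumption Markov decision process. -/
structure CMDP (S A : Type) [Fintype S] [Fintype A] where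
  /-- transition function -/
  δ : S → A → S → NNReal
  δ_sum : ∀ s a, ∑ t, δ s a t = 1
  /-- consumption function -/
  γ : S → A → ℕ
  /-- reload states -/
  R : Finset S
  /-- capacity -/
  cap : ℕ

namespace CMDP

variable {S A : Type} [Fintype S] [Fintype A] [DecidableEq S] [DecidableEq A]

/-- successors with positive transition probability -/
noncomputable def Succ (M : CMDP S A) (s : S) (a : A) : Finset S :=
  Finset.univ.filter (fun t => 0 < M.δ s a t)

/-- A (history-dependent) strategy: takes the initial load, the history
(list of state-action steps performed so far) and the current state. -/
def Strat (S A : Type) := ℕ → List (S × A) → S → A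

/-- An infinite run: a sequence of states and actions. -/
structure Run (S A : Type) where
  st : ℕ → S
  ac : ℕ → A

/-- the history (list of steps) formed by the first `i` steps of a run -/
def hist (ρ : Run S A) (i : ℕ) : List (S × A) :=
  (List.range i).map (fun j => (ρ.st j, ρ.ac j))

/-- a run is compatible with strategy `σ` under initial load `d` -/
def Compatible (M : CMDP S A) (σ : Strat S A) (d : ℕ) (ρ : Run S A) : Prop :=
  ∀ i, ρ.ac i = σ d (hist ρ i) (ρ.st i) ∧ 0 < M.δ (ρ.st i) (ρ.ac i) (ρ.st (i+1))

/-- one step of the resource-level evolution; `none` is ⊥ (exhaustion) -/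
def nextLevel (M : CMDP S A) (s : S) (a : A) : Option ℕ → Option ℕ
  | none => none
  | some l =>
      if s ∈ M.R then (if M.γ s a ≤ M.cap then some (M.cap - M.γ s a) else none)
      else (if M.γ s a ≤ l then some (l - M.γ s a) else none)

/-- resource levels along a path, starting from initial load `d` -/
def levels (M : CMDP S A) (d : ℕ) (st : ℕ → S) (ac : ℕ → A) : ℕ → Option ℕ
  | 0 => some d
  | i+1 => M.nextLevel (st i) (ac i) (levels M d st ac i)

/-- a run loaded with `d` is safe: ⊥ never occurs among the resource levels -/
def SafeRun (M : CMDP S A) (d : ℕ) (ρ : Run S A) : Prop :=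
  ∀ i, levels M d ρ.st ρ.ac i ≠ none

/-- all `σ`-compatible runs from `s` loaded with `d` are safe -/
def AllSafe (M : CMDP S A) (σ : Strat S A) (s : S) (d : ℕ) : Prop :=
  ∀ ρ : Run S A, Compatible M σ d ρ → ρ.st 0 = s → SafeRun M d ρ

/-- the resource level after a finite history -/
def levelOfHist (M : CMDP S A) (d : ℕ) (h : List (S × A)) : Option ℕ :=
  h.foldl (fun r p => M.nextLevel p.1 p.2 r) (some d)

/-- action value of `a` in `s` based on vector `v` -/
noncomputable def AV (M : CMDP S A) (v : S → ℕ∞) (s : S) (a : A) : ℕ∞ :=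
  (M.γ s a : ℕ∞) + (M.Succ s a).sup v

/-- the Bellman-style functional 𝓕 -/
noncomputable def Ffun (M : CMDP S A) (T : Finset S) (v : S → ℕ∞) : S → ℕ∞ :=
  fun s => if s ∈ T then 0 else Finset.univ.inf (fun a => M.AV v s a)

/-- the initial vector `x_T`: 0 on `T` and ∞ elsewhere -/
noncomputable def xT (T : Finset S) : S → ℕ∞ := fun s => if s ∈ T then 0 else ⊤

/-- truncation to zero on `T` -/
noncomputable def trunc0 (T : Finset S) (v : S → ℕ∞) : S → ℕ∞ :=
  fun s => if s ∈ T then 0 else v s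

/-- the functional 𝓖 (for reachability in at least one step) -/
noncomputable def Gfun (M : CMDP S A) (T : Finset S) (v : S → ℕ∞) : S → ℕ∞ :=
  fun s => Finset.univ.inf (fun a => M.AV (trunc0 T v) s a)

/-- bounded non-reloading reachability objective `Reach_T^i` -/
def NRReachB (M : CMDP S A) (T : Finset S) (i : ℕ) (d : ℕ) (ρ : Run S A) : Prop :=
  ∃ f ≤ i, ρ.st f ∈ T ∧ (∑ j ∈ Finset.range f, M.γ (ρ.st j) (ρ.ac j)) ≤ d

/-- non-reloading reachability objective -/
def NRReach (M : CMDP S A) (T : Finset S) (d : ℕ) (ρ : Run S A) : Prop :=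
  ∃ i, NRReachB M T i d ρ

/-- non-reloading reachability in at least one step -/
def NRReachPlus (M : CMDP S A) (T : Finset S) (d : ℕ) (ρ : Run S A) : Prop :=
  ∃ f, 1 ≤ f ∧ ρ.st f ∈ T ∧ (∑ j ∈ Finset.range f, M.γ (ρ.st j) (ρ.ac j)) ≤ d

/-- sure satisfaction of an objective from `s` loaded with `d` -/
def SureSat (M : CMDP S A) (σ : Strat S A) (s : S) (d : ℕ)
    (O : ℕ → Run S A → Prop) : Prop :=
  ∀ ρ, Compatible M σ d ρ → ρ.st 0 = s → O d ρ

/-- a vector of loads is sufficient for surely satisfying an objective -/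
def SatVec (M : CMDP S A) (O : ℕ → Run S A → Prop) (x : S → ℕ∞) : Prop :=
  ∃ σ : Strat S A, ∀ s (d : ℕ), x s = (d : ℕ∞) → SureSat M σ s d O

/-- `x` is the componentwise-minimal vector satisfying `Sat` -/
def IsML {S : Type} (Sat : (S → ℕ∞) → Prop) (x : S → ℕ∞) : Prop :=
  Sat x ∧ ∀ y, Sat y → x ≤ y

/-- a vector of loads is sufficient for safety -/
def SafetySat (M : CMDP S A) (x : S → ℕ∞) : Prop :=
  ∃ σ : Strat S A, ∀ s (d : ℕ), x s = (d : ℕ∞) → AllSafe M σ s d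

/-- a decreasing CMDP: every cycle contains a positive-consumption transition -/
def Decreasing (M : CMDP S A) : Prop :=
  ∀ (n : ℕ) (st : ℕ → S) (ac : ℕ → A), 0 < n →
    (∀ i < n, 0 < M.δ (st i) (ac i) (st (i+1))) → st 0 = st n →
    ∃ i < n, 0 < M.γ (st i) (ac i)

/-- a valid finite path of length `n` -/
def ValidPath (M : CMDP S A) (n : ℕ) (st : ℕ → S) (ac : ℕ → A) : Prop :=
  ∀ i < n, 0 < M.δ (st i) (ac i) (st (i+1))

/-- a simple path: no proper infix forms a cycle -/
def SimplePath (M : CMDP S A) (n : ℕ) (st : ℕ → S) (ac : ℕ → A) : Prop :=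
  ValidPath M n st ac ∧ ∀ i j, i < j → j ≤ n → st i = st j → i = 0 ∧ j = n

/-- probability, under strategy `σ` with load `d` and past history `h`, that the
next `n` steps (states s₁ … s_{n+1}) avoid `T`. -/
noncomputable def probAvoid (M : CMDP S A) (T : Finset S) (σ : Strat S A) (d : ℕ) :
    ℕ → List (S × A) → S → NNReal
  | 0, _, s => if s ∈ T then 0 else 1
  | n+1, h, s =>
      if s ∈ T then 0 else
      ∑ t, M.δ s (σ d h s) t * probAvoid M T σ d n (h ++ [(s, σ d h s)]) t

/-- probability, under strategy `σ` with load `d` and past history `h`, that the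
next `n` steps contain fewer than `k` visits to `T`. -/
noncomputable def probFew (M : CMDP S A) (T : Finset S) (σ : Strat S A) (d : ℕ) :
    ℕ → ℕ → List (S × A) → S → NNReal
  | 0, k, _, s => if k ≤ (if s ∈ T then 1 else 0) then 0 else 1
  | n+1, k, h, s =>
      if k ≤ (if s ∈ T then 1 else 0) then 0 else
      ∑ t, M.δ s (σ d h s) t *
        probFew M T σ d n (k - (if s ∈ T then 1 else 0)) (h ++ [(s, σ d h s)]) t

/-- hope value of successor `s'` for `a` in `s`, based on `x` and safety vector `mlS` -/
noncomputable def HV (M : CMDP S A) (mlS : S → ℕ∞) (x : S → ℕ∞)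
    (s : S) (a : A) (s' : S) : ℕ∞ :=
  max (x s') (((M.Succ s a).erase s').sup mlS)

/-- safe value of `a` in `s` based on `x` and safety vector `mlS` -/
noncomputable def SV (M : CMDP S A) (mlS : S → ℕ∞) (x : S → ℕ∞) (s : S) (a : A) : ℕ∞ :=
  (M.γ s a : ℕ∞) + (M.Succ s a).inf (fun s' => HV M mlS x s a s')

/-- thresholded safe value: only successors with probability at least `θ` count -/
noncomputable def SVθ (M : CMDP S A) (mlS : S → ℕ∞) (θ : NNReal) (x : S → ℕ∞)
    (s : S) (a : A) : ℕ∞ :=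
  (M.γ s a : ℕ∞) +
    ((M.Succ s a).filter (fun s' => θ ≤ M.δ s a s')).inf (fun s' => HV M mlS x s a s')

/-- the truncation operator ⌈·⌉_{R'}^{cap} -/
noncomputable def truncRset (M : CMDP S A) (R' : Finset S) (x : S → ℕ∞) : S → ℕ∞ :=
  fun s => if (M.cap : ℕ∞) < x s then ⊤ else if s ∈ R' then 0 else x s

/-- the functional 𝓐 -/
noncomputable def Afun (M : CMDP S A) (T : Finset S) (mlS : S → ℕ∞)
    (x : S → ℕ∞) : S → ℕ∞ :=
  fun s => if s ∈ T then mlS s else Finset.univ.inf (fun a => SV M mlS x s a)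

/-- the operator 𝓑 = ⌈𝓐(·)⌉_R^cap -/
noncomputable def Bfun (M : CMDP S A) (T : Finset S) (mlS : S → ℕ∞)
    (x : S → ℕ∞) : S → ℕ∞ :=
  truncRset M M.R (Afun M T mlS x)

/-- the thresholded functional 𝓐_θ -/
noncomputable def Aθfun (M : CMDP S A) (T : Finset S) (mlS : S → ℕ∞) (θ : NNReal)
    (x : S → ℕ∞) : S → ℕ∞ :=
  fun s => if s ∈ T then mlS s else Finset.univ.inf (fun a => SVθ M mlS θ x s a)

/-- the thresholded operator 𝓑_θ -/
noncomputable def Bθfun (M : CMDP S A) (T : Finset S) (mlS : S → ℕ∞) (θ : NNReal)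
    (x : S → ℕ∞) : S → ℕ∞ :=
  truncRset M M.R (Aθfun M T mlS θ x)

/-- the initial vector `y_T`: `mlS` on `T` and ∞ elsewhere -/
noncomputable def yT (M : CMDP S A) (T : Finset S) (mlS : S → ℕ∞) : S → ℕ∞ :=
  fun s => if s ∈ T then mlS s else ⊤

/-- a vector of loads suffices for safely reaching `T` within `i` steps with
positive probability -/
def PosReachSatB (M : CMDP S A) (T : Finset S) (i : ℕ) (x : S → ℕ∞) : Prop :=
  ∃ σ : Strat S A, ∀ s (d : ℕ), x s = (d : ℕ∞) →
    AllSafe M σ s d ∧ probAvoid M T σ d i [] s < 1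

/-- a vector of loads suffices for safely reaching `T` with positive probability -/
def PosReachSat (M : CMDP S A) (T : Finset S) (x : S → ℕ∞) : Prop :=
  ∃ σ : Strat S A, ∀ s (d : ℕ), x s = (d : ℕ∞) →
    AllSafe M σ s d ∧ ∃ i, probAvoid M T σ d i [] s < 1

/-- a vector of loads suffices for safely reaching `T` almost surely -/
def ASReachSat (M : CMDP S A) (T : Finset S) (x : S → ℕ∞) : Prop :=
  ∃ σ : Strat S A, ∀ s (d : ℕ), x s = (d : ℕ∞) →
    d ≤ M.cap ∧ AllSafe M σ s d ∧ (⨅ n, probAvoid M T σ d n [] s) = 0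

/-- a vector of loads suffices for safely visiting `T` infinitely often a.s. -/
def ASBuchiSat (M : CMDP S A) (T : Finset S) (x : S → ℕ∞) : Prop :=
  ∃ σ : Strat S A, ∀ s (d : ℕ), x s = (d : ℕ∞) →
    d ≤ M.cap ∧ AllSafe M σ s d ∧ ∀ k : ℕ, (⨅ n, probFew M T σ d n k [] s) = 0

/-- a safe action in `s` with resource level `l` (w.r.t. the safety vector `mlS`) -/
def SafeAct (M : CMDP S A) (mlS : S → ℕ∞) (s : S) (l : ℕ) (a : A) : Prop :=
  AV M mlS s a ≤ (l : ℕ∞) ∨ (AV M mlS s a ≤ (M.cap : ℕ∞) ∧ s ∈ M.R) ∨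
    (M.cap : ℕ∞) < mlS s

/-- a safe strategy picks a safe action whenever one exists -/
def SafeStrat (M : CMDP S A) (mlS : S → ℕ∞) (σ : Strat S A) : Prop :=
  ∀ (d : ℕ) (h : List (S × A)) (s : S) (l : ℕ), levelOfHist M d h = some l →
    (∃ a, SafeAct M mlS s l a) → SafeAct M mlS s l (σ d h s)

/-- the CMDP `C(R')`: as `M`, but with reload set `R'` -/
def withReloads (M : CMDP S A) (R' : Finset S) : CMDP S A :=
  { M with R := R' }

/-- a finite-memory strategy -/
def FiniteMemory (σ : Strat S A) : Prop :=
  ∃ (Mem : Type) (_ : Finite Mem) (upd : Mem → S × A → Mem) (m0 : ℕ → Mem)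
    (out : Mem → S → A), ∀ d h s, σ d h s = out (h.foldl upd (m0 d)) s

/-- the modified CMDP C→T with a fresh absorbing reload state `sink = none` -/
noncomputable def toSink (M : CMDP S A) (T : Finset S) (mlS : S → ℕ∞) :
    CMDP (Option S) A where
  δ := fun s a t =>
    match s with
    | none => if t = none then 1 else 0
    | some s' =>
        if s' ∈ T then (if t = none then 1 else 0)
        else (match t with
              | none => 0
              | some t' => M.δ s' a t')
  δ_sum := by
    intro s a
    cases s with
    | none => simp [Fintype.sum_option]
    | some s' =>
        by_cases hs : s' ∈ T
        · simp [hs, Fintype.sum_option]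
        · simp [hs, Fintype.sum_option, M.δ_sum]
  γ := fun s a =>
    match s with
    | none => 1
    | some s' =>
        if s' ∈ T then (if mlS s' = ⊤ then M.cap + 1 else (mlS s').toNat)
        else M.γ s' a
  R := insert none (M.R.image some)
  cap := M.cap

end CMDP

/-! Let `σ` witness that `ml(Reach⁺_{R'})` suffices for `Reach⁺_{R'}` and let `restartAt` play
`σ`, restarting it loaded with `ml(Reach⁺_{R'})(r)` at every visit of `r ∈ R'`. Since `σ` surely
returns to `R'` within its load, every stretch of a run between a restart and the next visit of
`R'` costs at most the load of that restart, which is at most `cap`: on `R'` by hypothesis, at the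
start because of the truncation. As `R' ⊆ R`, every stretch from a reload state up to the next
one lies inside such a stretch, so the resource level never becomes negative. The bound on `ml_S`
then follows from its minimality. -/

theorem sum_Ico_le_of_forall_segment {P : ℕ → Prop} {f : ℕ → ℕ} {c : ℕ}
    (h : ∀ u j, (u = 0 ∨ P u) → (∀ t, u < t → t < j → ¬ P t) →
      ∑ t ∈ Finset.Ico u j, f t ≤ c)
    (i j : ℕ) (hij : ∀ t, i < t → t < j → ¬ P t) :
    ∑ t ∈ Finset.Ico i j, f t ≤ c := by
  induction i with
  | zero => exact h 0 j (Or.inl rfl) hij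
  | succ i ih =>
    by_cases hi : P (i + 1)
    · exact h (i + 1) j (Or.inr hi) hij
    · refine le_trans (Finset.sum_le_sum_of_subset (Finset.Ico_subset_Ico_left i.le_succ))
        (ih fun t hit htj => ?_)
      rcases (Nat.succ_le_of_lt hit).lt_or_eq with hit | rfl
      exacts [hij t hit htj, hi]

namespace CMDP

section Histories

variable {S A : Type}

theorem hist_succ (ρ : Run S A) (i : ℕ) :
    hist ρ (i + 1) = hist ρ i ++ [(ρ.st i, ρ.ac i)] := by
  simp [hist, List.range_succ]

def Run.shift (ρ : Run S A) (u : ℕ) : Run S A :=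
  ⟨fun t => ρ.st (u + t), fun t => ρ.ac (u + t)⟩

theorem hist_add (ρ : Run S A) (u i : ℕ) :
    hist ρ (u + i) = hist ρ u ++ hist (ρ.shift u) i := by
  simp [hist, List.range_add, Run.shift]

theorem hist_succ_eq_cons (ρ : Run S A) (i : ℕ) :
    hist ρ (i + 1) = (ρ.st 0, ρ.ac 0) :: hist (ρ.shift 1) i := by
  simp [hist, List.range_succ_eq_map, Run.shift, Nat.add_comm 1]

theorem mem_hist {ρ : Run S A} {i : ℕ} {p : S × A} :
    p ∈ hist ρ i ↔ ∃ t < i, (ρ.st t, ρ.ac t) = p := by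
  simp [hist]

end Histories

section Extension

variable {S A : Type} [Fintype S] [Fintype A]

theorem exists_pos_δ (M : CMDP S A) (s : S) (a : A) : ∃ t, 0 < M.δ s a t := by
  by_contra! h
  have h0 : ∀ t, M.δ s a t = 0 := fun t => le_antisymm (h t) zero_le
  simpa [h0] using M.δ_sum s a

noncomputable def someSucc (M : CMDP S A) (s : S) (a : A) : S :=
  (M.exists_pos_δ s a).choose

theorem someSucc_pos (M : CMDP S A) (s : S) (a : A) : 0 < M.δ s a (M.someSucc s a) :=
  (M.exists_pos_δ s a).choose_spec

def CompatibleUpTo (M : CMDP S A) (σ : Strat S A) (d k : ℕ) (ρ : Run S A) : Prop :=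
  ∀ i < k, ρ.ac i = σ d (hist ρ i) (ρ.st i) ∧ 0 < M.δ (ρ.st i) (ρ.ac i) (ρ.st (i + 1))

/-- History and current state of a run that follows `ρ` for `k` steps and `σ` afterwards. -/
noncomputable def extendAux (M : CMDP S A) (σ : Strat S A) (d k : ℕ) (ρ : Run S A) :
    ℕ → List (S × A) × S
  | 0 => ([], ρ.st 0)
  | j + 1 =>
    let p := extendAux M σ d k ρ j
    (p.1 ++ [(p.2, σ d p.1 p.2)], if j < k then ρ.st (j + 1) else M.someSucc p.2 (σ d p.1 p.2))

noncomputable def extend (M : CMDP S A) (σ : Strat S A) (d k : ℕ) (ρ : Run S A) : Run S A where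
  st j := (extendAux M σ d k ρ j).2
  ac j := σ d (extendAux M σ d k ρ j).1 (extendAux M σ d k ρ j).2

theorem hist_extend (M : CMDP S A) (σ : Strat S A) (d k : ℕ) (ρ : Run S A) (j : ℕ) :
    hist (extend M σ d k ρ) j = (extendAux M σ d k ρ j).1 := by
  induction j with
  | zero => rfl
  | succ j ih => rw [hist_succ, ih]; rfl

theorem extend_st_of_lt (M : CMDP S A) (σ : Strat S A) (d k : ℕ) (ρ : Run S A) {j : ℕ}
    (hj : j < k) : (extend M σ d k ρ).st (j + 1) = ρ.st (j + 1) := by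
  simp [extend, extendAux, hj]

theorem CompatibleUpTo.extend_agree {M : CMDP S A} {σ : Strat S A} {d k : ℕ} {ρ : Run S A}
    (h : CompatibleUpTo M σ d k ρ) :
    ∀ i ≤ k, (extend M σ d k ρ).st i = ρ.st i ∧
      hist (extend M σ d k ρ) i = hist ρ i := by
  intro i hi
  induction i with
  | zero => exact ⟨rfl, rfl⟩
  | succ i ih =>
    obtain ⟨hst, hhist⟩ := ih (by omega)
    have hac : (extend M σ d k ρ).ac i = ρ.ac i := by
      rw [(h i hi).1, ← hst, ← hhist, hist_extend]
      rfl
    exact ⟨extend_st_of_lt M σ d k ρ hi, by rw [hist_succ, hist_succ, hst, hac, hhist]⟩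

theorem CompatibleUpTo.extend_ac {M : CMDP S A} {σ : Strat S A} {d k : ℕ} {ρ : Run S A}
    (h : CompatibleUpTo M σ d k ρ) {i : ℕ} (hi : i < k) :
    (extend M σ d k ρ).ac i = ρ.ac i := by
  obtain ⟨hst, hhist⟩ := h.extend_agree i hi.le
  rw [(h i hi).1, ← hst, ← hhist, hist_extend]
  rfl

theorem CompatibleUpTo.compatible_extend {M : CMDP S A} {σ : Strat S A} {d k : ℕ}
    {ρ : Run S A} (h : CompatibleUpTo M σ d k ρ) : Compatible M σ d (extend M σ d k ρ) := by
  intro i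
  refine ⟨by rw [hist_extend]; rfl, ?_⟩
  by_cases hik : i < k
  · rw [(h.extend_agree i hik.le).1, h.extend_ac hik, extend_st_of_lt M σ d k ρ hik]
    exact (h i hik).2
  · have hst : (extend M σ d k ρ).st (i + 1) =
        M.someSucc ((extend M σ d k ρ).st i) ((extend M σ d k ρ).ac i) := by
      simp [extend, extendAux, hik]
    rw [hst]
    exact M.someSucc_pos _ _

theorem NRReachPlus.sum_range_le {M : CMDP S A} {T : Finset S} {d : ℕ} {ρ : Run S A}
    (h : NRReachPlus M T d ρ) {k : ℕ} (hk : ∀ t, 0 < t → t < k → ρ.st t ∉ T) :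
    ∑ t ∈ Finset.range k, M.γ (ρ.st t) (ρ.ac t) ≤ d := by
  obtain ⟨f, hf, hfT, hsum⟩ := h
  have hkf : k ≤ f := by
    by_contra! hfk
    exact hk f hf hfk hfT
  exact le_trans (Finset.sum_le_sum_of_subset (Finset.range_subset_range.mpr hkf)) hsum

end Extension

section Restart

variable {S A : Type} [DecidableEq S]

/-- Memory of `restartAt`: the load and the history since the last restart. -/
def restartStep (R' : Finset S) (b : S → ℕ) (m : ℕ × List (S × A)) (p : S × A) :
    ℕ × List (S × A) :=
  if p.1 ∈ R' then (b p.1, [p]) else (m.1, m.2 ++ [p])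

/-- Play `σ`, restarting it with load `b r` and empty history at every visit of `r ∈ R'`. -/
def restartAt (R' : Finset S) (b : S → ℕ) (σ : Strat S A) : Strat S A := fun d h s =>
  if s ∈ R' then σ (b s) [] s
  else σ (h.foldl (restartStep R' b) (d, [])).1 (h.foldl (restartStep R' b) (d, [])).2 s

theorem foldl_restartStep_of_forall_not_mem {R' : Finset S} {b : S → ℕ} {l : List (S × A)}
    (hl : ∀ p ∈ l, p.1 ∉ R') (m : ℕ × List (S × A)) :
    l.foldl (restartStep R' b) m = (m.1, m.2 ++ l) := by
  induction l generalizing m with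
  | nil => simp
  | cons p l ih =>
    rw [List.foldl_cons, restartStep, if_neg (hl p List.mem_cons_self),
      ih fun q hq => hl q (List.mem_cons_of_mem p hq)]
    simp

theorem foldl_restartStep_append_cons {R' : Finset S} {b : S → ℕ} (l₀ : List (S × A))
    {p : S × A} (hp : p.1 ∈ R') {l : List (S × A)} (hl : ∀ q ∈ l, q.1 ∉ R')
    (m : ℕ × List (S × A)) :
    (l₀ ++ p :: l).foldl (restartStep R' b) m = (b p.1, p :: l) := by
  rw [List.foldl_append, List.foldl_cons, restartStep, if_pos hp,
    foldl_restartStep_of_forall_not_mem hl]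
  rfl

end Restart

section Safety

variable {S A : Type} [Fintype S] [Fintype A] [DecidableEq S]

theorem nextLevel_some (M : CMDP S A) (s : S) (a : A) (l : ℕ) :
    M.nextLevel s a (some l) =
      if M.γ s a ≤ (if s ∈ M.R then M.cap else l) then
        some ((if s ∈ M.R then M.cap else l) - M.γ s a)
      else none := by
  by_cases hs : s ∈ M.R <;> simp [nextLevel, hs]

theorem safeRun_of_sum_Ico_le (M : CMDP S A) {d : ℕ} {ρ : Run S A}
    (hstart : ∀ j, (∀ t < j, ρ.st t ∉ M.R) →
      ∑ t ∈ Finset.range j, M.γ (ρ.st t) (ρ.ac t) ≤ d)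
    (hreload : ∀ i j, ρ.st i ∈ M.R → (∀ t, i < t → t < j → ρ.st t ∉ M.R) →
      ∑ t ∈ Finset.Ico i j, M.γ (ρ.st t) (ρ.ac t) ≤ M.cap) :
    SafeRun M d ρ := by
  have key : ∀ i, ∃ l, levels M d ρ.st ρ.ac i = some l ∧ ∀ j, i < j →
      (∀ t, i ≤ t → t < j → ρ.st t ∉ M.R) →
      ∑ t ∈ Finset.Ico i j, M.γ (ρ.st t) (ρ.ac t) ≤ l := by
    intro i
    induction i with
    | zero =>
      refine ⟨d, rfl, fun j _ hj => ?_⟩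
      rw [← Finset.range_eq_Ico]
      exact hstart j fun t ht => hj t t.zero_le ht
    | succ i ih =>
      obtain ⟨l, hl, hbound⟩ := ih
      set c := if ρ.st i ∈ M.R then M.cap else l with hc
      have hstep : ∀ j, i < j → (∀ t, i < t → t < j → ρ.st t ∉ M.R) →
          ∑ t ∈ Finset.Ico i j, M.γ (ρ.st t) (ρ.ac t) ≤ c := by
        intro j hij hj
        by_cases hi : ρ.st i ∈ M.R
        · simpa only [hc, if_pos hi] using hreload i j hi hj
        · simp only [hc, if_neg hi]
          refine hbound j hij fun t hit htj => ?_
          rcases hit.lt_or_eq with hit | rfl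
          exacts [hj t hit htj, hi]
      have hγ : M.γ (ρ.st i) (ρ.ac i) ≤ c := by
        simpa using hstep (i + 1) (by omega) (by omega)
      refine ⟨c - M.γ (ρ.st i) (ρ.ac i), ?_, fun j hij hj => ?_⟩
      · simp only [levels, hl, nextLevel_some, ← hc, if_pos hγ]
      · have := hstep j (by omega) fun t hit htj => hj t hit htj
        rw [Finset.sum_eq_sum_Ico_succ_bot (by omega)] at this
        omega
  intro i
  obtain ⟨l, hl, -⟩ := key i
  simp [hl]

theorem Compatible.compatibleUpTo_shift {M : CMDP S A} {R' : Finset S} {b : S → ℕ}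
    {σ : Strat S A} {d : ℕ} {ρ : Run S A} (hρ : Compatible M (restartAt R' b σ) d ρ)
    {u k : ℕ} (hu : u = 0 ∨ ρ.st u ∈ R')
    (hk : ∀ t, 0 < t → t < k → ρ.st (u + t) ∉ R') :
    CompatibleUpTo M σ (if ρ.st u ∈ R' then b (ρ.st u) else d) k (ρ.shift u) := by
  intro i hi
  refine ⟨?_, (hρ (u + i)).2⟩
  change ρ.ac (u + i) = _
  rw [(hρ (u + i)).1, restartAt]
  by_cases hsu : ρ.st u ∈ R'
  · rcases Nat.eq_zero_or_pos i with rfl | hi0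
    · simp [hsu, hist, Run.shift]
    obtain ⟨i, rfl⟩ : ∃ i', i = i' + 1 := ⟨i - 1, by omega⟩
    have htail : ∀ q ∈ hist ((ρ.shift u).shift 1) i, q.1 ∉ R' := by
      intro q hq
      obtain ⟨t, ht, rfl⟩ := mem_hist.mp hq
      simpa [Run.shift, Nat.add_assoc] using hk (1 + t) (by omega) (by omega)
    rw [if_neg (hk (i + 1) (by omega) hi), hist_add, hist_succ_eq_cons,
      foldl_restartStep_append_cons _ hsu htail, ← hist_succ_eq_cons, if_pos hsu]
    rfl
  · obtain rfl : u = 0 := hu.resolve_right hsu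
    have hfree : ∀ q ∈ hist ρ i, q.1 ∉ R' := by
      intro q hq
      obtain ⟨t, ht, rfl⟩ := mem_hist.mp hq
      rcases Nat.eq_zero_or_pos t with rfl | ht0
      exacts [hsu, by simpa using hk t ht0 (by omega)]
    have hi' : ρ.st (0 + i) ∉ R' := by
      rcases Nat.eq_zero_or_pos i with rfl | hi0
      exacts [hsu, hk i hi0 hi]
    rw [if_neg hi', if_neg hsu, Nat.zero_add, foldl_restartStep_of_forall_not_mem hfree]
    simp [hist, Run.shift]

/-- Extend the stretch to a full run of `σ`, which surely reaches `R'` again within its load. -/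
theorem Compatible.sum_Ico_le_restartAt {M : CMDP S A} {R' : Finset S} {b : S → ℕ}
    {σ : Strat S A} {d : ℕ} {ρ : Run S A} (hρ : Compatible M (restartAt R' b σ) d ρ)
    (hσ : ∀ r ∈ R', SureSat M σ r (b r) (NRReachPlus M R'))
    (hσ₀ : ρ.st 0 ∉ R' → SureSat M σ (ρ.st 0) d (NRReachPlus M R'))
    {u j : ℕ} (hu : u = 0 ∨ ρ.st u ∈ R') (huj : ∀ t, u < t → t < j → ρ.st t ∉ R') :
    ∑ t ∈ Finset.Ico u j, M.γ (ρ.st t) (ρ.ac t) ≤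
      if ρ.st u ∈ R' then b (ρ.st u) else d := by
  have hsure : SureSat M σ (ρ.st u) (if ρ.st u ∈ R' then b (ρ.st u) else d)
      (NRReachPlus M R') := by
    by_cases hsu : ρ.st u ∈ R'
    · simpa [hsu] using hσ _ hsu
    · obtain rfl : u = 0 := hu.resolve_right hsu
      simpa [hsu] using hσ₀ hsu
  have hk : ∀ t, 0 < t → t < j - u → ρ.st (u + t) ∉ R' :=
    fun t ht htk => huj (u + t) (by omega) (by omega)
  have hup := hρ.compatibleUpTo_shift hu hk
  rw [Finset.sum_Ico_eq_sum_range]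
  calc ∑ t ∈ Finset.range (j - u), M.γ (ρ.st (u + t)) (ρ.ac (u + t))
      = ∑ t ∈ Finset.range (j - u), M.γ ((extend M σ _ _ (ρ.shift u)).st t)
          ((extend M σ _ _ (ρ.shift u)).ac t) := by
        refine Finset.sum_congr rfl fun t ht => ?_
        have ht := Finset.mem_range.mp ht
        rw [(hup.extend_agree t ht.le).1, hup.extend_ac ht]
        rfl
    _ ≤ _ := (hsure _ hup.compatible_extend rfl).sum_range_le fun t ht htk => by
        rw [(hup.extend_agree t htk.le).1]
        exact hk t ht htk

theorem allSafe_restartAt {M : CMDP S A} {R' : Finset S} (hR : R' ⊆ M.R) {b : S → ℕ}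
    {σ : Strat S A} (hσ : ∀ r ∈ R', SureSat M σ r (b r) (NRReachPlus M R'))
    (hb : ∀ r ∈ R', b r ≤ M.cap) {s : S} {d : ℕ} (hd : d ≤ M.cap)
    (hs : s ∉ R' → SureSat M σ s d (NRReachPlus M R')) :
    AllSafe M (restartAt R' b σ) s d := by
  rintro ρ hρ rfl
  have hseg := fun u j => hρ.sum_Ico_le_restartAt hσ hs (u := u) (j := j)
  have hfree : ∀ {i j}, (∀ t, i < t → t < j → ρ.st t ∉ M.R) →
      ∀ t, i < t → t < j → ρ.st t ∉ R' :=
    fun h t hit htj hR' => h t hit htj (hR hR')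
  refine M.safeRun_of_sum_Ico_le (fun j hj => ?_) fun i j _ hij => ?_
  · rcases Nat.eq_zero_or_pos j with rfl | hj0
    · simp
    have hs0 : ρ.st 0 ∉ R' := fun h => hj 0 hj0 (hR h)
    have := hseg 0 j (Or.inl rfl) (hfree fun t _ htj => hj t htj)
    rwa [if_neg hs0, ← Finset.range_eq_Ico] at this
  · refine sum_Ico_le_of_forall_segment (fun u j hu huj => (hseg u j hu huj).trans ?_) i j
      (hfree hij)
    split_ifs with hsu
    exacts [hb _ hsu, hd]

theorem truncRset_eq_coe {M : CMDP S A} {R' : Finset S} {x : S → ℕ∞} {s : S} {d : ℕ}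
    (h : truncRset M R' x s = d) : d ≤ M.cap ∧ (s ∉ R' → x s = d) := by
  unfold truncRset at h
  split_ifs at h with hcap hs
  · exact absurd h (ENat.top_ne_natCast d)
  · obtain rfl : d = 0 := by exact_mod_cast h.symm
    exact ⟨Nat.zero_le _, fun h' => absurd hs h'⟩
  · exact ⟨by exact_mod_cast h ▸ not_lt.mp hcap, fun _ => h⟩

end Safety

end CMDP

open CMDP in
theorem stmt16_general {S A : Type} [Fintype S] [Fintype A] [DecidableEq S]
    (M : CMDP S A) (R' : Finset S) (hR : R' ⊆ M.R)
    (nvec : S → ℕ∞) (hn : IsML (SatVec M (NRReachPlus M R')) nvec)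
    (hcap : ∀ r ∈ R', nvec r ≤ (M.cap : ℕ∞))
    (mlS : S → ℕ∞) (hmlS : IsML (SafetySat M) mlS) :
    (∀ (s : S) (d : ℕ), truncRset M R' nvec s = (d : ℕ∞) →
      ∃ σ : Strat S A, AllSafe M σ s d) ∧
    (∀ s : S, mlS s ≤ truncRset M R' nvec s) := by
  obtain ⟨σ, hσ⟩ := hn.1
  have hnvec : ∀ r ∈ R', nvec r = ((nvec r).toNat : ℕ∞) := fun r hr =>
    (ENat.natCast_toNat (ne_top_of_le_ne_top (ENat.natCast_ne_top _) (hcap r hr))).symm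
  have hsafe : ∀ s (d : ℕ), truncRset M R' nvec s = d →
      AllSafe M (restartAt R' (fun r => (nvec r).toNat) σ) s d := by
    intro s d hd
    obtain ⟨hdcap, hs⟩ := truncRset_eq_coe hd
    exact allSafe_restartAt hR (fun r hr => hσ r _ (hnvec r hr))
      (fun r hr => ENat.toNat_le_of_le_natCast (hcap r hr)) hdcap fun h => hσ s d (hs h)
  exact ⟨fun s d hd => ⟨_, hsafe s d hd⟩, fun s => hmlS.2 _ ⟨_, hsafe⟩ s⟩

open CMDP in
/-- if every `r ∈ R'` satisfies `ml(Reach⁺_{R'})(r) ≤ cap`, then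
from every state `s` with `⌈ml(Reach⁺_{R'})⌉_{R'}^{cap}(s) = d ≤ cap` some
strategy keeps all runs safe; hence `ml_S ≤ ⌈ml(Reach⁺_{R'})⌉_{R'}^{cap}`. -/
theorem stmt16 {S A : Type} [Fintype S] [Fintype A] [DecidableEq S] [DecidableEq A]
    (M : CMDP S A) (R' : Finset S) (hR : R' ⊆ M.R)
    (nvec : S → ℕ∞) (hn : IsML (SatVec M (NRReachPlus M R')) nvec)
    (hcap : ∀ r ∈ R', nvec r ≤ (M.cap : ℕ∞))
    (mlS : S → ℕ∞) (hmlS : IsML (SafetySat M) mlS) :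
    (∀ (s : S) (d : ℕ), truncRset M R' nvec s = (d : ℕ∞) →
      ∃ σ : Strat S A, AllSafe M σ s d) ∧
    (∀ s : S, mlS s ≤ truncRset M R' nvec s) :=
  stmt16_general M R' hR nvec hn hcap mlS hmlS
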